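/- If there exists a (c,t) LP-packing in an abelian group G of order t²c² relative to a subgroup U of order tc, and s divides t, then there exists an (sc, t/s) LP-packing in G relative to U. -/

import Mathlib

/-!
A regular set `D` in an abelian group of order `n²` with `|D| = r(n - 1)` is a Latin square type
`(n, r)` PDS exactly when every nontrivial character sum `χ(D)` is `n - r` or `-r`: expanding
`χ(D)² = |D| + ∑_g diffCount D g · χ(g)` gives the quadratic `(χ(D) - (n - r))(χ(D) + r) = 0`,
and conversely Fourier inversion recovers the difference counts from the quadratic.

In a `(c, t)` LP-packing every `χ(P i)` is `tc - c` or `-c`, and they add up to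
`χ(G ∖ U) ∈ {0, -tc}`, so at most one of them is `tc - c`. Hence the union of any `s` members has
character values in `{tc - sc, -sc}` and is a `(tc, sc)` Latin square type PDS.
-/

open Finset BigOperators

variable {G : Type*}

/-- Number of ordered pairs `(x,y)` with `x,y ∈ D`, `x ≠ y`, `x * y⁻¹ = g`. -/
noncomputable def diffCount [Group G] (D : Set G) (g : G) : ℕ :=
  Nat.card {p : G × G // p.1 ∈ D ∧ p.2 ∈ D ∧ p.1 ≠ p.2 ∧ p.1 * p.2⁻¹ = g}

/-- `D` is a `(v,k,λ,μ)` partial difference set in `G`. -/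
def IsPDS [Group G] (D : Set G) (v k : ℕ) (l m : ℤ) : Prop :=
  Nat.card G = v ∧ Nat.card D = k ∧
    ∀ g : G, g ≠ 1 →
      (g ∈ D → (diffCount D g : ℤ) = l) ∧ (g ∉ D → (diffCount D g : ℤ) = m)

/-- A regular PDS: a PDS avoiding the identity and closed under inversion. -/
def IsRegularPDS [Group G] (D : Set G) (v k : ℕ) (l m : ℤ) : Prop :=
  IsPDS D v k l m ∧ (1 : G) ∉ D ∧ D⁻¹ = D

/-- A regular `(n,r)` Latin square type PDS. -/
def IsLatinPDS [Group G] (D : Set G) (n r : ℕ) : Prop :=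
  IsRegularPDS D (n ^ 2) (r * (n - 1)) ((n : ℤ) + (r : ℤ) ^ 2 - 3 * r) ((r : ℤ) ^ 2 - r)

/-- A regular `(n,r)` negative Latin square type PDS. -/
def IsNegLatinPDS [Group G] (D : Set G) (n r : ℕ) : Prop :=
  IsRegularPDS D (n ^ 2) (r * (n + 1)) (-(n : ℤ) + (r : ℤ) ^ 2 + 3 * r) ((r : ℤ) ^ 2 + r)

/-- Character sum `χ(D) = ∑_{d ∈ D} χ(d)`. -/
noncomputable def charSum [Group G] (χ : G →* ℂˣ) (D : Set G) : ℂ :=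
  ∑ᶠ d ∈ D, (χ d : ℂ)

/-- The multiset of character sums `{χ(P 0), …, χ(P (t-1))}`. -/
noncomputable def charMultiset [Group G] {t : ℕ} (χ : G →* ℂˣ) (P : Fin t → Set G) :
    Multiset ℂ :=
  (Finset.univ.val : Multiset (Fin t)).map fun i => charSum χ (P i)

/-- `χ` is principal on the subgroup `U`. -/
def IsPrincipalOn [Group G] (χ : G →* ℂˣ) (U : Subgroup G) : Prop :=
  ∀ u ∈ U, χ u = 1

/-- A `(c,t)` LP-packing in `G` relative to `U`. -/
def IsLPPacking [CommGroup G] (c t : ℕ) (P : Fin t → Set G) (U : Subgroup G) : Prop :=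
  Nat.card G = t ^ 2 * c ^ 2 ∧ Nat.card U = t * c ∧
    (∀ i, IsLatinPDS (P i) (t * c) c) ∧
    (∀ i j, i ≠ j → Disjoint (P i) (P j)) ∧
    (⋃ i, P i) = Set.univ \ (U : Set G)

/-- A `(c,t-1)` NLP-packing in `G`. -/
def IsNLPPacking [CommGroup G] (c t : ℕ) (P : Fin (t - 1) → Set G) : Prop :=
  Nat.card G = t ^ 2 * c ^ 2 ∧
    (∀ i, IsNegLatinPDS (P i) (t * c) c) ∧
    IsNegLatinPDS (Set.univ \ ({1} ∪ ⋃ i, P i)) (t * c) (c - 1)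

/-- A `(c,t)` LP-partition in `G − V` relative to `H`. -/
def IsLPPartition [CommGroup G] (c t : ℕ) (R : Fin t → Set G) (V H : Subgroup G) : Prop :=
  Nat.card G = t ^ 2 * c ^ 2 ∧ Nat.card V = t * c ^ 2 ∧ H ≤ V ∧
    (∀ i, Nat.card (R i) = (t - 1) * c ^ 2) ∧
    (∀ i j, i ≠ j → Disjoint (R i) (R j)) ∧
    (⋃ i, R i) = Set.univ \ (V : Set G) ∧
    ∀ χ : G →* ℂˣ, χ ≠ 1 →
      (IsPrincipalOn χ V → charMultiset χ R = Multiset.replicate t (-(c : ℂ) ^ 2)) ∧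
      (¬ IsPrincipalOn χ V → IsPrincipalOn χ H →
        charMultiset χ R = Multiset.replicate t 0) ∧
      (¬ IsPrincipalOn χ H →
        charMultiset χ R = ((t : ℂ) - 1) * (c : ℂ) ::ₘ Multiset.replicate (t - 1) (-(c : ℂ)))

section Orthogonality

variable {G : Type*} [CommGroup G]

lemma sum_char_eq_zero [Fintype G] {χ : G →* ℂˣ} (hχ : χ ≠ 1) : ∑ g, (χ g : ℂ) = 0 :=
  sum_hom_units_eq_zero ((Units.coeHom ℂ).comp χ) fun h ↦
    hχ <| MonoidHom.ext fun g ↦ Units.ext <| DFunLike.congr_fun h g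

lemma sum_char_apply_eq_ite [Finite G] [Fintype (G →* ℂˣ)] [DecidableEq G] (g : G) :
    ∑ χ : G →* ℂˣ, (χ g : ℂ) = if g = 1 then (Nat.card G : ℂ) else 0 := by
  split_ifs with hg
  · simp [hg, ← Nat.card_eq_fintype_card, CommGroup.card_monoidHom_of_hasEnoughRootsOfUnity]
  · obtain ⟨χ, hχ⟩ := CommGroup.exists_apply_ne_one_of_hasEnoughRootsOfUnity G ℂ hg
    exact sum_char_eq_zero (χ := MonoidHom.eval g) fun h ↦ hχ (DFunLike.congr_fun h χ)

lemma sum_char_mul_sum_mul_char_inv [Fintype G] [Fintype (G →* ℂˣ)] (f : G → ℂ) (g : G) :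
    ∑ χ : G →* ℂˣ, (∑ h, f h * χ h) * χ g⁻¹ = Nat.card G * f g := by
  classical
  calc ∑ χ : G →* ℂˣ, (∑ h, f h * χ h) * χ g⁻¹
      = ∑ h, f h * ∑ χ : G →* ℂˣ, (χ (h * g⁻¹) : ℂ) := by
        simp_rw [sum_mul, mul_sum, map_mul, Units.val_mul, mul_assoc]
        exact sum_comm
    _ = Nat.card G * f g := by
        simp_rw [sum_char_apply_eq_ite, mul_inv_eq_one, mul_ite, mul_zero]
        rw [sum_ite_eq' univ g, if_pos (mem_univ g), mul_comm]

lemma eq_of_forall_sum_mul_char_eq [Fintype G] {f f' : G → ℂ}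
    (h : ∀ χ : G →* ℂˣ, ∑ g, f g * χ g = ∑ g, f' g * χ g) : f = f' := by
  have := Fintype.ofFinite (G →* ℂˣ)
  funext g
  have hG : (Nat.card G : ℂ) ≠ 0 := Nat.cast_ne_zero.mpr Nat.card_pos.ne'
  apply mul_left_cancel₀ hG
  simp_rw [← sum_char_mul_sum_mul_char_inv, h]

end Orthogonality

section CharSum

variable {G : Type*} [CommGroup G]

lemma charSum_eq_sum_indicator [Fintype G] (χ : G →* ℂˣ) (D : Set G) :
    charSum χ D = ∑ g, D.indicator 1 g * (χ g : ℂ) := by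
  rw [charSum, finsum_mem_def, finsum_eq_sum_of_fintype]
  refine sum_congr rfl fun g _ ↦ ?_
  by_cases hg : g ∈ D <;> simp [hg]

lemma charSum_one [Finite G] (D : Set G) : charSum 1 D = Nat.card D := by
  simp only [charSum, MonoidHom.one_apply, Units.val_one]
  rw [Nat.card_coe_set_eq, ← finsum_one, Nat.cast_finsum_mem (Set.toFinite D), Nat.cast_one]

lemma charSum_biUnion [Finite G] (χ : G →* ℂˣ) {ι : Type*} (B : Finset ι) {A : ι → Set G}
    (h : (B : Set ι).PairwiseDisjoint A) :
    charSum χ (⋃ i ∈ B, A i) = ∑ i ∈ B, charSum χ (A i) := by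
  simp only [charSum]
  rw [← finsum_mem_coe_finset, ← finsum_mem_biUnion h B.finite_toSet fun _ _ ↦ Set.toFinite _]
  rfl

lemma charSum_univ_sdiff [Finite G] {χ : G →* ℂˣ} (hχ : χ ≠ 1) (D : Set G) :
    charSum χ (Set.univ \ D) = -charSum χ D := by
  have := Fintype.ofFinite G
  have h := finsum_mem_add_sdiff (f := fun g ↦ (χ g : ℂ)) (Set.subset_univ D) Set.finite_univ
  rw [finsum_mem_univ, finsum_eq_sum_of_fintype (fun g ↦ (χ g : ℂ)), sum_char_eq_zero hχ] at h
  exact eq_neg_of_add_eq_zero_right h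

lemma charSum_subgroup_of_isPrincipalOn [Finite G] {χ : G →* ℂˣ} {U : Subgroup G}
    (hU : IsPrincipalOn χ U) : charSum χ U = Nat.card U := by
  refine (finsum_mem_congr rfl fun u hu ↦ ?_).trans (charSum_one (U : Set G))
  simp [hU u hu]

lemma charSum_subgroup_of_not_isPrincipalOn [Finite G] {χ : G →* ℂˣ} {U : Subgroup G}
    (hU : ¬IsPrincipalOn χ U) : charSum χ U = 0 := by
  have := Fintype.ofFinite U
  rw [charSum, ← finsum_set_coe_eq_finsum_mem, finsum_eq_sum_of_fintype]
  exact sum_char_eq_zero (χ := χ.comp U.subtype) fun h ↦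
    hU fun u hu ↦ DFunLike.congr_fun h ⟨u, hu⟩

end CharSum

section DiffCount

variable {G : Type*} [CommGroup G]

lemma diffCount_one (D : Set G) : diffCount D 1 = 0 := by
  rw [diffCount, Nat.card_eq_zero]
  exact Or.inl ⟨fun ⟨p, _, _, hne, h⟩ ↦ hne (mul_inv_eq_one.mp h)⟩

lemma diffCount_eq_card_filter_offDiag [Fintype G] [DecidableEq G] (D : Set G)
    [DecidablePred (· ∈ D)] (g : G) :
    diffCount D g = #{p ∈ D.toFinset.offDiag | p.1 * p.2⁻¹ = g} := by
  rw [diffCount, Nat.card_eq_fintype_card, Fintype.card_subtype]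
  congr 1
  ext p
  simp [and_assoc]

lemma charSum_inv [Finite G] (χ : G →* ℂˣ) (D : Set G) :
    charSum χ D⁻¹ = ∑ᶠ d ∈ D, (χ d⁻¹ : ℂ) := by
  rw [charSum, ← Set.image_inv_eq_inv, finsum_mem_image inv_injective.injOn]

lemma charSum_mul_charSum_inv [Fintype G] (χ : G →* ℂˣ) (D : Set G) :
    charSum χ D * charSum χ D⁻¹ = Nat.card D + ∑ g, (diffCount D g : ℂ) * χ g := by
  classical
  set T := D.toFinset
  have hprod : charSum χ D * charSum χ D⁻¹ = ∑ p ∈ T ×ˢ T, (χ (p.1 * p.2⁻¹) : ℂ) := by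
    rw [charSum_inv, charSum, finsum_mem_eq_toFinset_sum, finsum_mem_eq_toFinset_sum,
      sum_mul_sum, sum_product]
    simp [T]
  have hdiag : ∑ p ∈ T.diag, (χ (p.1 * p.2⁻¹) : ℂ) = Nat.card D := by
    simp [T]
  have hoffDiag : ∑ p ∈ T.offDiag, (χ (p.1 * p.2⁻¹) : ℂ) = ∑ g, (diffCount D g : ℂ) * χ g := by
    rw [← sum_fiberwise T.offDiag (fun p ↦ p.1 * p.2⁻¹)]
    refine sum_congr rfl fun g _ ↦ ?_
    rw [diffCount_eq_card_filter_offDiag, ← nsmul_eq_mul, ← sum_const]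
    exact sum_congr rfl fun p hp ↦ by rw [(mem_filter.mp hp).2]
  rw [hprod, ← diag_union_offDiag, sum_union (disjoint_diag_offDiag T), hdiag, hoffDiag]

end DiffCount

section LatinPDS

variable {G : Type*} [CommGroup G]

lemma sum_ite_add_indicator_add_const_mul_char [Fintype G] [DecidableEq G] (a b c : ℂ)
    (D : Set G) (χ : G →* ℂˣ) :
    ∑ g, ((if g = 1 then a else 0) + b * D.indicator 1 g + c) * χ g
      = a + b * charSum χ D + c * ∑ g, (χ g : ℂ) := by
  simp_rw [add_mul, sum_add_distrib, ite_mul, zero_mul, sum_ite_eq', if_pos (mem_univ _),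
    mul_assoc, ← mul_sum, charSum_eq_sum_indicator, map_one, Units.val_one, mul_one]

lemma IsRegularPDS.diffCount_eq [DecidableEq G] {D : Set G} {v k : ℕ} {l m : ℤ}
    (h : IsRegularPDS D v k l m) (g : G) :
    (diffCount D g : ℂ) = (if g = 1 then -(m : ℂ) else 0) + (l - m) * D.indicator 1 g + m := by
  obtain ⟨⟨-, -, hcount⟩, h1, -⟩ := h
  by_cases hg : g = 1
  · simp [hg, h1, diffCount_one]
  by_cases hgD : g ∈ D
  · simp [hg, hgD, ← (hcount g hg).1 hgD]
  · simp [hg, hgD, ← (hcount g hg).2 hgD]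

lemma one_le_of_card_eq_sq [Finite G] {n : ℕ} (hG : Nat.card G = n ^ 2) : 1 ≤ n := by
  have := hG ▸ (Nat.card_pos (α := G))
  exact Nat.one_le_iff_ne_zero.mpr fun hn ↦ by simp [hn] at this

lemma IsLatinPDS.charSum_eq_or [Finite G] {D : Set G} {n r : ℕ} (h : IsLatinPDS D n r)
    {χ : G →* ℂˣ} (hχ : χ ≠ 1) : charSum χ D = n - r ∨ charSum χ D = -r := by
  classical
  have := Fintype.ofFinite G
  obtain ⟨⟨hG, hk, -⟩, -, hinv⟩ := id h
  have hn := one_le_of_card_eq_sq hG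
  have hsq := charSum_mul_charSum_inv χ D
  simp_rw [hinv, h.diffCount_eq, sum_ite_add_indicator_add_const_mul_char, sum_char_eq_zero hχ,
    hk] at hsq
  push_cast [Nat.cast_sub hn] at hsq
  have : (charSum χ D - (n - r)) * (charSum χ D + r) = 0 := by linear_combination hsq
  rcases mul_eq_zero.mp this with h | h
  · exact .inl (sub_eq_zero.mp h)
  · exact .inr (eq_neg_of_add_eq_zero_left h)

lemma isLatinPDS_of_charSum_eq_or [Finite G] {D : Set G} {n r : ℕ} (hG : Nat.card G = n ^ 2)
    (hk : Nat.card D = r * (n - 1)) (h1 : (1 : G) ∉ D) (hinv : D⁻¹ = D)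
    (hχ : ∀ χ : G →* ℂˣ, χ ≠ 1 → charSum χ D = n - r ∨ charSum χ D = -r) :
    IsLatinPDS D n r := by
  classical
  have := Fintype.ofFinite G
  have hn := one_le_of_card_eq_sq hG
  -- Both sides have Fourier transform `χ ↦ (charSum χ D) ^ 2`: the left one by
  -- `charSum_mul_charSum_inv`, the right one by `hχ` (and by counting at `χ = 1`).
  have hfun : (fun g ↦ (if g = 1 then (Nat.card D : ℂ) else 0) + diffCount D g) =
      fun g ↦ (if g = 1 then (r * n - r ^ 2 : ℂ) else 0) + (n - 2 * r) * D.indicator 1 g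
        + (r ^ 2 - r) := by
    refine eq_of_forall_sum_mul_char_eq fun χ ↦ ?_
    rw [sum_ite_add_indicator_add_const_mul_char]
    simp_rw [add_mul, sum_add_distrib, ite_mul, zero_mul, sum_ite_eq', if_pos (mem_univ _),
      map_one, Units.val_one, mul_one, ← charSum_mul_charSum_inv, hinv]
    by_cases hχ1 : χ = 1
    · subst hχ1
      simp only [charSum_one, MonoidHom.one_apply, Units.val_one, sum_const, card_univ,
        nsmul_eq_mul, mul_one, ← Nat.card_eq_fintype_card, hG, hk]
      push_cast [Nat.cast_sub hn]
      ring
    · rw [sum_char_eq_zero hχ1]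
      rcases hχ χ hχ1 with h | h <;> rw [h] <;> ring
  refine ⟨⟨hG, hk, fun g hg ↦ ⟨fun hgD ↦ ?_, fun hgD ↦ ?_⟩⟩, h1, hinv⟩ <;>
    have hg' := congr_fun hfun g <;>
    simp only [hg, hgD, Set.indicator_apply, Pi.one_apply, if_true, if_false] at hg' <;>
    exact Int.cast_injective (α := ℂ) (by push_cast; linear_combination hg')

end LatinPDS

namespace IsLPPacking

variable {G : Type*} [CommGroup G] {c t : ℕ} {P : Fin t → Set G} {U : Subgroup G}

lemma card_eq (h : IsLPPacking c t P U) : Nat.card G = t ^ 2 * c ^ 2 :=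
  h.1

lemma card_subgroup (h : IsLPPacking c t P U) : Nat.card U = t * c :=
  h.2.1

lemma isLatinPDS (h : IsLPPacking c t P U) (i : Fin t) : IsLatinPDS (P i) (t * c) c :=
  h.2.2.1 i

lemma disjoint (h : IsLPPacking c t P U) {i j : Fin t} (hij : i ≠ j) : Disjoint (P i) (P j) :=
  h.2.2.2.1 i j hij

lemma iUnion_eq (h : IsLPPacking c t P U) : ⋃ i, P i = Set.univ \ U :=
  h.2.2.2.2

lemma pairwiseDisjoint (h : IsLPPacking c t P U) (B : Finset (Fin t)) :
    (B : Set (Fin t)).PairwiseDisjoint P :=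
  fun _ _ _ _ ↦ h.disjoint

lemma subset_univ_sdiff (h : IsLPPacking c t P U) (i : Fin t) : P i ⊆ Set.univ \ U :=
  h.iUnion_eq ▸ Set.subset_iUnion P i

variable [Finite G]

lemma sum_charSum_eq (h : IsLPPacking c t P U) {χ : G →* ℂˣ} (hχ : χ ≠ 1)
    (B : Finset (Fin t)) :
    ∑ i ∈ B, charSum χ (P i)
      = t * c * #{i ∈ B | charSum χ (P i) = t * c - c} - #B * c := by
  have hval : ∀ i, charSum χ (P i)
      = if charSum χ (P i) = t * c - c then (t * c - c : ℂ) else -c := fun i ↦ by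
    split_ifs with hi
    · exact hi
    · simpa [hi] using (h.isLatinPDS i).charSum_eq_or hχ
  rw [sum_congr rfl fun i _ ↦ hval i, sum_ite, sum_const, sum_const, nsmul_eq_mul, nsmul_eq_mul,
    ← card_filter_add_card_filter_not (s := B) (fun i ↦ charSum χ (P i) = t * c - c)]
  push_cast
  ring

/-- The values `charSum χ (P i) ∈ {tc - c, -c}` add up to `charSum χ (G ∖ U) ∈ {0, -tc}`. -/
lemma card_filter_charSum_eq_le_one (h : IsLPPacking c t P U) {χ : G →* ℂˣ} (hχ : χ ≠ 1) :
    #{i | charSum χ (P i) = t * c - c} ≤ 1 := by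
  have htc : (t * c : ℂ) ≠ 0 := by
    have hG : 0 < (t * c) ^ 2 := mul_pow t c 2 ▸ h.card_eq ▸ Nat.card_pos
    exact_mod_cast (pow_pos_iff two_ne_zero).mp hG |>.ne'
  have htot := h.sum_charSum_eq hχ univ
  rw [← charSum_biUnion χ univ (h.pairwiseDisjoint univ)] at htot
  simp only [mem_univ, Set.iUnion_true, h.iUnion_eq, charSum_univ_sdiff hχ, card_univ,
    Fintype.card_fin] at htot
  by_cases hU : IsPrincipalOn χ U
  · rw [charSum_subgroup_of_isPrincipalOn hU, h.card_subgroup] at htot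
    have : (t * c : ℂ) * #{i | charSum χ (P i) = t * c - c} = 0 := by
      push_cast at htot; linear_combination -htot
    exact (Nat.cast_eq_zero.mp ((mul_eq_zero.mp this).resolve_left htc)).trans_le zero_le_one
  · rw [charSum_subgroup_of_not_isPrincipalOn hU] at htot
    have : (t * c : ℂ) * #{i | charSum χ (P i) = t * c - c} = t * c * 1 := by
      linear_combination -htot
    exact (Nat.cast_eq_one.mp (mul_left_cancel₀ htc this)).le

lemma isLatinPDS_biUnion (h : IsLPPacking c t P U) (B : Finset (Fin t)) :
    IsLatinPDS (⋃ i ∈ B, P i) (t * c) (#B * c) := by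
  refine isLatinPDS_of_charSum_eq_or (by rw [h.card_eq]; ring) ?_ ?_ ?_ fun χ hχ ↦ ?_
  · have hcard i : Nat.card (P i) = c * (t * c - 1) := (h.isLatinPDS i).1.2.1
    rw [Nat.card_coe_set_eq, ← set_biUnion_coe,
      B.finite_toSet.ncard_biUnion (fun _ _ ↦ Set.toFinite _) (h.pairwiseDisjoint B),
      finsum_mem_coe_finset]
    simp_rw [← Nat.card_coe_set_eq, hcard, sum_const, smul_eq_mul]
    ring
  · simp only [Set.mem_iUnion, not_exists]
    exact fun i _ h1 ↦ (h.subset_univ_sdiff i h1).2 U.one_mem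
  · simp only [Set.iUnion_inv, fun i ↦ (h.isLatinPDS i).2.2]
  · have hle : #{i ∈ B | charSum χ (P i) = t * c - c} ≤ 1 :=
      (card_le_card (filter_subset_filter _ (subset_univ B))).trans
        (h.card_filter_charSum_eq_le_one hχ)
    rw [charSum_biUnion χ B (h.pairwiseDisjoint B), h.sum_charSum_eq hχ B]
    interval_cases #{i ∈ B | charSum χ (P i) = t * c - c}
    · exact .inr (by push_cast; ring)
    · exact .inl (by push_cast; ring)

lemma merge (h : IsLPPacking c t P U) {m k : ℕ} (f : Fin t → Fin m)
    (hf : ∀ j, #{i | f i = j} = k) :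
    IsLPPacking (k * c) m (fun j ↦ ⋃ i ∈ ({i | f i = j} : Finset (Fin t)), P i) U := by
  have hmk : m * k = t := by
    simpa [hf] using (card_eq_sum_card_fiberwise (f := f) (s := univ) (t := univ)
      fun _ _ ↦ mem_coe.mpr (mem_univ _)).symm
  refine ⟨?_, ?_, fun j ↦ ?_, fun j j' hjj' ↦ ?_, ?_⟩
  · rw [h.card_eq, ← hmk]; ring
  · rw [h.card_subgroup, ← hmk]; ring
  · simpa only [hf, ← hmk, mul_assoc] using h.isLatinPDS_biUnion {i | f i = j}
  · simp only [Set.disjoint_iUnion_left, Set.disjoint_iUnion_right, mem_filter, mem_univ,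
      true_and]
    rintro i' rfl i rfl
    exact h.disjoint (ne_of_apply_ne f hjj')
  · rw [← h.iUnion_eq]
    ext x
    simp

end IsLPPacking

theorem stmt_7 {G : Type*} [CommGroup G] [Finite G] (c t s : ℕ) (U : Subgroup G)
    (P : Fin t → Set G) (h : IsLPPacking c t P U) (hs : s ∣ t) :
    ∃ Q : Fin (t / s) → Set G, IsLPPacking (s * c) (t / s) Q U := by
  let e : Fin t ≃ Fin (t / s) × Fin s :=
    (finCongr (Nat.div_mul_cancel hs).symm).trans finProdFinEquiv.symm
  refine ⟨_, h.merge (fun i ↦ (e i).1) fun j ↦ ?_⟩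
  rw [card_equiv e (t := {p | p.1 = j}) (by simp), card_filter, Fintype.sum_prod_type]
  simp [apply_ite]
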